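/- arXiv:1005.0322 — 6 statements merged into one kernel-verified Lean document; each statement's English description precedes it below -/
import Mathlib

section
/- Let X be a metric space, let f_1, ..., f_N : X → X be continuous maps with Hutchinson operator F, and suppose the induced map F : H(X) → H(X) is continuous with respect to the Hausdorff metric. Let A be a nonempty compact subset of X with F(A) = A, and let U be an open set with A ⊆ U such that for every nonempty compact B ⊆ U the iterates F^k(B) converge to A in the Hausdorff metric. Then for every set B ⊆ U whose closure is compact and contained in U, A = ⋂_{K≥1} closure(⋃_{k≥K} F^k(B)). -/
open Metric Filter TopologicalSpace
open scoped Topology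

/-- If `F` is the Hutchinson operator of an IFS of continuous maps, the induced map on the
space `H(X)` of nonempty compact subsets (with the Hausdorff metric) is continuous, `A` is
an attractor of the IFS whose basin contains the open set `U`, and `B ⊆ U` is a nonempty set
whose closure is compact and contained in `U`, then
`A = ⋂_{K ≥ 1} closure (⋃_{k ≥ K} F^[k] B)`. -/
theorem attractor_eq_iInter_closure_tail {X : Type*} [MetricSpace X] {N : ℕ}
    (f : Fin N → X → X) (hf : ∀ i, Continuous (f i))
    (F : Set X → Set X) (hF : ∀ S : Set X, F S = ⋃ i, f i '' S)
    (FH : NonemptyCompacts X → NonemptyCompacts X)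
    (hFH : ∀ B : NonemptyCompacts X, (FH B : Set X) = F (B : Set X))
    (hcont : Continuous FH)
    (A : Set X) (hA : A.Nonempty) (hAc : IsCompact A) (hfix : F A = A)
    (U : Set X) (hU : IsOpen U) (hAU : A ⊆ U)
    (hattr : ∀ B : Set X, B.Nonempty → IsCompact B → B ⊆ U →
      Tendsto (fun k => hausdorffDist (F^[k] B) A) atTop (𝓝 0))
    (B : Set X) (hBne : B.Nonempty) (hBU : B ⊆ U)
    (hBc : IsCompact (closure B)) (hBcl : closure B ⊆ U) :
    A = ⋂ K ≥ 1, closure (⋃ k ≥ K, F^[k] B) := by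
  -- `N ≥ 1` since `A` is nonempty and fixed
  have hN : Nonempty (Fin N) := by
    by_contra h
    rw [not_nonempty_iff] at h
    have h0 : F A = ∅ := by rw [hF]; exact Set.iUnion_of_empty _
    rw [hfix] at h0
    exact hA.ne_empty h0
  -- basic properties of F
  have Fmono : ∀ {S T : Set X}, S ⊆ T → F S ⊆ F T := by
    intro S T hST
    rw [hF, hF]
    exact Set.iUnion_mono fun i => Set.image_mono hST
  have Fcomp : ∀ {S : Set X}, IsCompact S → IsCompact (F S) := by
    intro S hS
    rw [hF]
    exact isCompact_iUnion fun i => hS.image (hf i)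
  have Fne : ∀ {S : Set X}, S.Nonempty → (F S).Nonempty := by
    intro S hS
    obtain ⟨x, hx⟩ := hS
    refine ⟨f hN.some x, ?_⟩
    rw [hF]
    exact Set.mem_iUnion.mpr ⟨hN.some, Set.mem_image_of_mem _ hx⟩
  have Fcl : ∀ S : Set X, F (closure S) ⊆ closure (F S) := by
    intro S
    rw [hF]
    refine Set.iUnion_subset fun i => ?_
    exact (image_closure_subset_closure_image (hf i)).trans
      (closure_mono (by rw [hF]; exact Set.subset_iUnion (fun i => f i '' S) i))
  -- iterated versions
  have Fitermono : ∀ k, F^[k] B ⊆ F^[k] (closure B) := by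
    intro k
    induction k with
    | zero => simpa using subset_closure
    | succ n ih =>
      rw [Function.iterate_succ_apply', Function.iterate_succ_apply']
      exact Fmono ih
  have Fitercomp : ∀ k, IsCompact (F^[k] (closure B)) := by
    intro k
    induction k with
    | zero => simpa using hBc
    | succ n ih => rw [Function.iterate_succ_apply']; exact Fcomp ih
  have Fiterne : ∀ k, (F^[k] (closure B)).Nonempty := by
    intro k
    induction k with
    | zero => simpa using hBne.closure
    | succ n ih => rw [Function.iterate_succ_apply']; exact Fne ih
  have Fitercl : ∀ k, F^[k] (closure B) ⊆ closure (F^[k] B) := by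
    intro k
    induction k with
    | zero => simp
    | succ n ih =>
      rw [Function.iterate_succ_apply', Function.iterate_succ_apply']
      exact (Fmono ih).trans (Fcl _)
  -- finiteness of Hausdorff edistances
  have hEd : ∀ k, EMetric.hausdorffEdist (F^[k] (closure B)) A ≠ ⊤ := fun k =>
    hausdorffEdist_ne_top_of_nonempty_of_bounded (Fiterne k) hA
      (Fitercomp k).isBounded hAc.isBounded
  -- convergence of the iterates of the closure of B
  have hT := hattr (closure B) hBne.closure hBc hBcl
  ext x
  simp only [Set.mem_iInter]
  constructor
  · intro hx K _
    rw [Metric.mem_closure_iff]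
    intro ε hε
    have hev : ∀ᶠ k in atTop, hausdorffDist (F^[k] (closure B)) A < ε / 2 :=
      hT.eventually (gt_mem_nhds (by positivity))
    obtain ⟨k, hk1, hk2⟩ := (hev.and (eventually_ge_atTop K)).exists
    have h1 : infDist x (F^[k] (closure B)) ≤ hausdorffDist (F^[k] (closure B)) A := by
      rw [hausdorffDist_comm]
      exact infDist_le_hausdorffDist_of_mem hx (by
        rw [EMetric.hausdorffEdist_comm]; exact hEd k)
    obtain ⟨y, hy, hxy⟩ := (Fitercomp k).exists_infDist_eq_dist (Fiterne k) x
    have hxy' : dist x y < ε / 2 := by rw [← hxy]; exact h1.trans_lt hk1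
    have hy' : y ∈ closure (F^[k] B) := Fitercl k hy
    obtain ⟨z, hz, hyz⟩ := Metric.mem_closure_iff.mp hy' (ε / 2) (by positivity)
    refine ⟨z, Set.mem_biUnion hk2 hz, ?_⟩
    calc dist x z ≤ dist x y + dist y z := dist_triangle x y z
    _ < ε / 2 + ε / 2 := add_lt_add hxy' hyz
    _ = ε := by ring
  · intro hx
    have key : ∀ ε > (0:ℝ), infDist x A ≤ ε := by
      intro ε hε
      have hev : ∀ᶠ k in atTop, hausdorffDist (F^[k] (closure B)) A < ε :=
        hT.eventually (gt_mem_nhds hε)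
      obtain ⟨K₀, hK₀⟩ := eventually_atTop.mp hev
      set K := max 1 K₀ with hK
      have hxK : x ∈ closure (⋃ k ≥ K, F^[k] B) := hx K (le_max_left _ _)
      have hsub : (⋃ k ≥ K, F^[k] B) ⊆ {y | infDist y A ≤ ε} := by
        rintro z hz
        simp only [Set.mem_iUnion] at hz
        obtain ⟨k, hk, hzk⟩ := hz
        have : infDist z A ≤ hausdorffDist (F^[k] (closure B)) A :=
          infDist_le_hausdorffDist_of_mem (Fitermono k hzk) (hEd k)
        exact this.trans (hK₀ k (le_trans (le_max_right _ _) hk)).le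
      have hclosed : IsClosed {y : X | infDist y A ≤ ε} :=
        isClosed_le (continuous_infDist_pt A) continuous_const
      exact (closure_minimal hsub hclosed) hxK
    have h0 : infDist x A = 0 := by
      by_contra h
      have hpos : 0 < infDist x A := lt_of_le_of_ne infDist_nonneg (Ne.symm h)
      linarith [key (infDist x A / 2) (by linarith)]
    have := hAc.isClosed.closure_eq ▸ mem_closure_iff_infDist_zero hA |>.mpr h0
    exact this
end

section
/- Let X be a metric space, let f_1, ..., f_N : X → X be continuous maps with Hutchinson operator F, and suppose the induced map F : H(X) → H(X) is continuous with respect to the Hausdorff metric. Let A and B be nonempty compact subsets of X such that the iterates F^k(B) converge to A in the Hausdorff metric, and set Ã = ⋂_{K≥1} closure(⋃_{k≥K} F^k(B)). Then à is a nonempty compact set satisfying F(Ã) = Ã. -/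
open Metric Filter TopologicalSpace
open scoped Topology

/-!
Since `F^[k] B → A` in `H(X)` and `F` is continuous on `H(X)`, the limit `A` is a fixed point
of `F`. On the other hand, the tail intersection `⋂_K closure (⋃_{k ≥ K} C k)` of any sequence
`C k` of nonempty compact sets converging to `A` in the Hausdorff metric is `A` itself, so `Ã = A`.
-/

namespace Metric.NonemptyCompacts

variable {X : Type*} [MetricSpace X]

theorem subset_thickening_of_dist_lt {s t : NonemptyCompacts X} {ε : ℝ} (h : dist s t < ε) :
    (s : Set X) ⊆ thickening ε t := fun _ hy =>
  mem_thickening_iff.2 (exists_dist_lt_of_hausdorffDist_lt hy h (edist_ne_top s t))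

theorem iInter_closure_iUnion_subset_of_tendsto {C : ℕ → NonemptyCompacts X}
    {A : NonemptyCompacts X} (h : Tendsto C atTop (𝓝 A)) (K₀ : ℕ) :
    ⋂ K ≥ K₀, closure (⋃ k ≥ K, (C k : Set X)) ⊆ A := by
  intro x hx
  rw [← A.isCompact.isClosed.closure_eq, closure_eq_iInter_cthickening, Set.mem_iInter₂]
  intro ε hε
  obtain ⟨K, hK⟩ := eventually_atTop.1 (h.eventually (ball_mem_nhds A hε))
  have htail : ⋃ k ≥ max K K₀, (C k : Set X) ⊆ thickening ε A :=
    Set.iUnion₂_subset fun k hk => subset_thickening_of_dist_lt (hK k (le_of_max_le_left hk))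
  exact closure_thickening_subset_cthickening ε _
    (closure_mono htail (Set.mem_iInter₂.1 hx _ (le_max_right K K₀)))

theorem subset_closure_iUnion_of_tendsto {C : ℕ → NonemptyCompacts X}
    {A : NonemptyCompacts X} (h : Tendsto C atTop (𝓝 A)) (K : ℕ) :
    (A : Set X) ⊆ closure (⋃ k ≥ K, (C k : Set X)) := by
  intro a ha
  refine Metric.mem_closure_iff.2 fun ε hε => ?_
  obtain ⟨k, hk, hkK⟩ :=
    ((h.eventually (ball_mem_nhds A hε)).and (eventually_ge_atTop K)).exists
  obtain ⟨b, hb, hab⟩ :=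
    mem_thickening_iff.1 (subset_thickening_of_dist_lt (dist_comm (C k) A ▸ hk) ha)
  exact ⟨b, Set.mem_biUnion hkK hb, hab⟩

theorem iInter_closure_iUnion_eq_of_tendsto {C : ℕ → NonemptyCompacts X}
    {A : NonemptyCompacts X} (h : Tendsto C atTop (𝓝 A)) (K₀ : ℕ) :
    ⋂ K ≥ K₀, closure (⋃ k ≥ K, (C k : Set X)) = A :=
  (iInter_closure_iUnion_subset_of_tendsto h K₀).antisymm
    (Set.subset_iInter₂ fun K _ => subset_closure_iUnion_of_tendsto h K)

end Metric.NonemptyCompacts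

theorem tail_intersection_invariant_general {X : Type*} [MetricSpace X]
    (F : Set X → Set X)
    (FH : NonemptyCompacts X → NonemptyCompacts X)
    (hFH : ∀ B : NonemptyCompacts X, (FH B : Set X) = F (B : Set X))
    (hcont : Continuous FH)
    (A B : Set X) (hA : A.Nonempty) (hAc : IsCompact A)
    (hB : B.Nonempty) (hBc : IsCompact B)
    (hconv : Tendsto (fun k => hausdorffDist (F^[k] B) A) atTop (𝓝 0))
    (Atilde : Set X) (hAtilde : Atilde = ⋂ K ≥ 1, closure (⋃ k ≥ K, F^[k] B)) :
    Atilde.Nonempty ∧ IsCompact Atilde ∧ F Atilde = Atilde := by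
  let A' : NonemptyCompacts X := ⟨⟨A, hAc⟩, hA⟩
  let B' : NonemptyCompacts X := ⟨⟨B, hBc⟩, hB⟩
  have hiter : ∀ k, (FH^[k] B' : Set X) = F^[k] B :=
    (Function.Semiconj.iterate_right hFH · B')
  have hlim : Tendsto (fun k => FH^[k] B') atTop (𝓝 A') := by
    refine tendsto_iff_dist_tendsto_zero.2 ?_
    simp only [NonemptyCompacts.dist_eq, hiter]
    exact hconv
  have hfix : F A = A :=
    (hFH A').symm.trans
      (congrArg SetLike.coe (isFixedPt_of_tendsto_iterate hlim hcont.continuousAt))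
  have hAtilde_eq : Atilde = A := by
    simp only [hAtilde, ← hiter]
    exact NonemptyCompacts.iInter_closure_iUnion_eq_of_tendsto hlim 1
  rw [hAtilde_eq]
  exact ⟨hA, hAc, hfix⟩

/-- Let `F` be the Hutchinson operator of an IFS of continuous maps whose induced map on the
space `H(X)` of nonempty compact subsets (with the Hausdorff metric) is continuous. If `A`
and `B` are nonempty compact subsets of `X` with `F^[k] B → A` in the Hausdorff metric, then
`Ã = ⋂_{K ≥ 1} closure (⋃_{k ≥ K} F^[k] B)` is a nonempty compact set with `F Ã = Ã`. -/
theorem tail_intersection_invariant {X : Type*} [MetricSpace X] {N : ℕ} (hN : 0 < N)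
    (f : Fin N → X → X) (hf : ∀ i, Continuous (f i))
    (F : Set X → Set X) (hF : ∀ S : Set X, F S = ⋃ i, f i '' S)
    (FH : NonemptyCompacts X → NonemptyCompacts X)
    (hFH : ∀ B : NonemptyCompacts X, (FH B : Set X) = F (B : Set X))
    (hcont : Continuous FH)
    (A B : Set X) (hA : A.Nonempty) (hAc : IsCompact A)
    (hB : B.Nonempty) (hBc : IsCompact B)
    (hconv : Tendsto (fun k => hausdorffDist (F^[k] B) A) atTop (𝓝 0))
    (Atilde : Set X) (hAtilde : Atilde = ⋂ K ≥ 1, closure (⋃ k ≥ K, F^[k] B)) :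
    Atilde.Nonempty ∧ IsCompact Atilde ∧ F Atilde = Atilde :=
  tail_intersection_invariant_general F FH hFH hcont A B hA hAc hB hBc hconv Atilde hAtilde
end

section
/- Let X be a proper metric space, let f_1, ..., f_N : X → X be continuous maps with Hutchinson operator F, let A be a nonempty compact set with F(A) = A, and let U be an open set with A ⊆ U such that F^k(B) → A in the Hausdorff metric for every nonempty compact B ⊆ U. Let ε > 0 be small enough that the closed ε-neighborhood of A is contained in U. Then there is an integer M = M(ε) such that for every x in the ε-neighborhood of A there exists an integer m < M with Hausdorff distance d_H(A, F^m({x})) < ε/2. -/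
open Metric Filter
open scoped Topology

/-- Let `X` be proper, `F` the Hutchinson operator of an IFS of continuous maps, `A` an
attractor (with `F A = A`) whose basin contains the open set `U`, and let `ε > 0` be small
enough that the closed `ε`-neighborhood of `A` lies in `U`. Then there is an integer `M`
such that for every `x` in the (open) `ε`-neighborhood of `A` there is `m < M` with
`d_H(A, F^[m] {x}) < ε / 2`. -/
theorem uniform_time_to_approach_attractor {X : Type*} [MetricSpace X] [ProperSpace X]
    {N : ℕ} (f : Fin N → X → X) (hf : ∀ i, Continuous (f i))
    (F : Set X → Set X) (hF : ∀ S : Set X, F S = ⋃ i, f i '' S)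
    (A : Set X) (hA : A.Nonempty) (hAc : IsCompact A) (hfix : F A = A)
    (U : Set X) (hU : IsOpen U) (hAU : A ⊆ U)
    (hattr : ∀ B : Set X, B.Nonempty → IsCompact B → B ⊆ U →
      Tendsto (fun k => hausdorffDist (F^[k] B) A) atTop (𝓝 0))
    (ε : ℝ) (hε : 0 < ε) (hεU : Metric.cthickening ε A ⊆ U) :
    ∃ M : ℕ, ∀ x ∈ Metric.thickening ε A, ∃ m : ℕ, m < M ∧
      hausdorffDist A (F^[m] {x}) < ε / 2 := by
  -- N > 0
  rcases Nat.eq_zero_or_pos N with hN | hN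
  · subst hN
    rw [hF] at hfix
    simp only [Set.iUnion_of_empty] at hfix
    exact absurd hfix.symm hA.ne_empty
  haveI : Nonempty (Fin N) := Fin.pos_iff_nonempty.mp hN
  -- finiteness and nonemptiness of iterated singletons
  have hfin : ∀ (m : ℕ) (x : X), (F^[m] ({x} : Set X)).Finite ∧ (F^[m] ({x} : Set X)).Nonempty := by
    intro m x
    induction m with
    | zero => simp
    | succ m ih =>
      rw [Function.iterate_succ_apply', hF]
      constructor
      · exact Set.finite_iUnion fun i => ih.1.image (f i)
      · obtain ⟨i⟩ := (inferInstance : Nonempty (Fin N))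
        exact ⟨f i ih.2.choose, Set.mem_iUnion.2 ⟨i, Set.mem_image_of_mem _ ih.2.choose_spec⟩⟩
  -- continuity-type matching lemma
  have hmatch : ∀ (m : ℕ) (x : X) (δ : ℝ), 0 < δ → ∃ η > 0, ∀ y : X, dist x y < η →
      (∀ s ∈ F^[m] ({x} : Set X), ∃ t ∈ F^[m] ({y} : Set X), dist s t ≤ δ) ∧
      (∀ t ∈ F^[m] ({y} : Set X), ∃ s ∈ F^[m] ({x} : Set X), dist s t ≤ δ) := by
    intro m x
    induction m with
    | zero =>
      intro δ hδ
      refine ⟨δ, hδ, fun y hy => ⟨?_, ?_⟩⟩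
      · intro s hs
        simp only [Function.iterate_zero_apply, Set.mem_singleton_iff] at hs
        subst hs
        exact ⟨y, by simp, hy.le⟩
      · intro t ht
        simp only [Function.iterate_zero_apply, Set.mem_singleton_iff] at ht
        subst ht
        exact ⟨x, by simp, hy.le⟩
    | succ m ih =>
      intro δ hδ
      set S := F^[m] ({x} : Set X) with hS
      have hSfin : S.Finite := (hfin m x).1
      have hC : IsCompact (cthickening 1 S) :=
        isCompact_of_isClosed_isBounded isClosed_cthickening hSfin.isBounded.cthickening
      have hUC : ∀ i : Fin N, ∃ r > 0, ∀ z ∈ cthickening 1 S, ∀ w ∈ cthickening 1 S,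
          dist z w < r → dist (f i z) (f i w) ≤ δ := by
        intro i
        have := hC.uniformContinuousOn_of_continuous (hf i).continuousOn
        rw [Metric.uniformContinuousOn_iff] at this
        obtain ⟨r, hr, h⟩ := this δ hδ
        exact ⟨r, hr, fun z hz w hw hzw => (h z hz w hw hzw).le⟩
      choose r hr hmod using hUC
      set r0 : ℝ := min 1 (Finset.univ.inf' Finset.univ_nonempty r) with hr0def
      have hr0 : 0 < r0 := lt_min one_pos (by
        rw [Finset.lt_inf'_iff]; exact fun i _ => hr i)
      have hr0le : ∀ i, r0 ≤ r i := fun i =>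
        (min_le_right _ _).trans (Finset.inf'_le _ (Finset.mem_univ i))
      have hr0le1 : r0 ≤ 1 := min_le_left _ _
      obtain ⟨η, hη, hIH⟩ := ih (r0 / 2) (by positivity)
      refine ⟨η, hη, fun y hy => ?_⟩
      obtain ⟨h1, h2⟩ := hIH y hy
      constructor
      · intro s' hs'
        rw [Function.iterate_succ_apply', hF] at hs'
        simp only [Set.mem_iUnion, Set.mem_image] at hs'
        obtain ⟨i, s, hsS, rfl⟩ := hs'
        obtain ⟨t, htT, hst⟩ := h1 s hsS
        have hsC : s ∈ cthickening 1 S := self_subset_cthickening _ hsS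
        have htC : t ∈ cthickening 1 S :=
          mem_cthickening_of_dist_le t s 1 S hsS (by rw [dist_comm]; linarith [hst, hr0le1])
        refine ⟨f i t, ?_, ?_⟩
        · rw [Function.iterate_succ_apply', hF]
          exact Set.mem_iUnion.2 ⟨i, Set.mem_image_of_mem _ htT⟩
        · exact hmod i s hsC t htC (lt_of_le_of_lt hst (by linarith [hr0le i]))
      · intro t' ht'
        rw [Function.iterate_succ_apply', hF] at ht'
        simp only [Set.mem_iUnion, Set.mem_image] at ht'
        obtain ⟨i, t, htT, rfl⟩ := ht'
        obtain ⟨s, hsS, hst⟩ := h2 t htT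
        have hsC : s ∈ cthickening 1 S := self_subset_cthickening _ hsS
        have htC : t ∈ cthickening 1 S :=
          mem_cthickening_of_dist_le t s 1 S hsS (by rw [dist_comm]; linarith [hst, hr0le1])
        refine ⟨f i s, ?_, ?_⟩
        · rw [Function.iterate_succ_apply', hF]
          exact Set.mem_iUnion.2 ⟨i, Set.mem_image_of_mem _ hsS⟩
        · exact hmod i s hsC t htC (lt_of_le_of_lt hst (by linarith [hr0le i]))
  set K := cthickening ε A with hK
  have hKc : IsCompact K :=
    isCompact_of_isClosed_isBounded isClosed_cthickening hAc.isBounded.cthickening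
  -- key local statement
  have key : ∀ x : X, ∃ m : ℕ, ∃ η : ℝ, 0 < η ∧ (x ∈ K →
      ∀ y : X, dist x y < η → hausdorffDist A (F^[m] ({y} : Set X)) < ε / 2) := by
    intro x
    by_cases hxK : x ∈ K
    · have hxU : ({x} : Set X) ⊆ U := Set.singleton_subset_iff.2 (hεU hxK)
      have htd := hattr {x} (Set.singleton_nonempty x) isCompact_singleton hxU
      have : ∀ᶠ k in atTop, hausdorffDist (F^[k] ({x} : Set X)) A < ε / 4 :=
        htd.eventually (gt_mem_nhds (by positivity))
      obtain ⟨m, hm⟩ := this.exists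
      obtain ⟨η, hη, hmat⟩ := hmatch m x (ε / 4) (by positivity)
      refine ⟨m, η, hη, fun _ y hy => ?_⟩
      obtain ⟨h1, h2⟩ := hmat y hy
      have hdist2 : hausdorffDist (F^[m] ({x} : Set X)) (F^[m] ({y} : Set X)) ≤ ε / 4 :=
        hausdorffDist_le_of_mem_dist (by positivity) h1
          (fun t ht => by obtain ⟨s, hs, hst⟩ := h2 t ht; exact ⟨s, hs, by rw [dist_comm]; exact hst⟩)
      have hne : EMetric.hausdorffEdist A (F^[m] ({x} : Set X)) ≠ ⊤ :=
        hausdorffEdist_ne_top_of_nonempty_of_bounded hA (hfin m x).2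
          hAc.isBounded (hfin m x).1.isBounded
      calc hausdorffDist A (F^[m] ({y} : Set X))
          ≤ hausdorffDist A (F^[m] ({x} : Set X)) +
            hausdorffDist (F^[m] ({x} : Set X)) (F^[m] ({y} : Set X)) :=
            hausdorffDist_triangle hne
        _ < ε / 4 + ε / 4 := by
            rw [hausdorffDist_comm] at hm
            exact add_lt_add_of_lt_of_le hm hdist2
        _ = ε / 2 := by ring
    · exact ⟨0, 1, one_pos, fun h => absurd h hxK⟩
  choose m η hη hkey using key
  obtain ⟨t, htK, hcover⟩ := hKc.elim_nhds_subcover (fun x => ball x (η x))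
    (fun x _ => ball_mem_nhds x (hη x))
  refine ⟨t.sup m + 1, fun x hx => ?_⟩
  have hxK : x ∈ K := thickening_subset_cthickening _ _ hx
  obtain ⟨x0, hx0t, hxball⟩ := Set.mem_iUnion₂.1 (hcover hxK)
  refine ⟨m x0, Nat.lt_succ_of_le (Finset.le_sup hx0t), ?_⟩
  exact hkey x0 (htK x0 hx0t) x (by rw [dist_comm]; exact mem_ball.1 hxball)
end

section
/- Let X be a proper metric space, let f_1, ..., f_N : X → X be continuous maps with Hutchinson operator F, let A be a nonempty compact set with F(A) = A, and let U be an open set with A ⊆ U such that F^k(B) → A in the Hausdorff metric for every nonempty compact B ⊆ U. Let x_0 ∈ U and let (x_k) be any sequence satisfying x_k = f_{σ_k}(x_{k-1}) for some choice of indices σ_k ∈ {1,...,N}. Then for every ε > 0 there is an integer K such that x_k lies in the open ε-neighborhood {y : dist(y,A) < ε} of A for all k ≥ K. -/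
open Metric Filter
open scoped Topology

/-- Let `X` be proper, `F` the Hutchinson operator of an IFS of continuous maps, `A` an
attractor (with `F A = A`) whose basin contains the open set `U`, and let `(x k)` be any
orbit starting at `x 0 ∈ U` with `x (k+1) = f (σ (k+1)) (x k)` for some choice of indices.
Then for every `ε > 0` the orbit eventually stays in the open `ε`-neighborhood of `A`. -/
theorem orbit_eventually_in_thickening {X : Type*} [MetricSpace X] [ProperSpace X]
    {N : ℕ} (f : Fin N → X → X) (hf : ∀ i, Continuous (f i))
    (F : Set X → Set X) (hF : ∀ S : Set X, F S = ⋃ i, f i '' S)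
    (A : Set X) (hA : A.Nonempty) (hAc : IsCompact A) (hfix : F A = A)
    (U : Set X) (hU : IsOpen U) (hAU : A ⊆ U)
    (hattr : ∀ B : Set X, B.Nonempty → IsCompact B → B ⊆ U →
      Tendsto (fun k => hausdorffDist (F^[k] B) A) atTop (𝓝 0))
    (x : ℕ → X) (hx0 : x 0 ∈ U) (σ : ℕ → Fin N)
    (hx : ∀ k : ℕ, x (k + 1) = f (σ (k + 1)) (x k)) :
    ∀ ε > (0 : ℝ), ∃ K : ℕ, ∀ k ≥ K, x k ∈ Metric.thickening ε A := by
  intro ε hε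
  set B : Set X := {x 0} with hB
  have hBne : B.Nonempty := Set.singleton_nonempty _
  have hBc : IsCompact B := isCompact_singleton
  have hBU : B ⊆ U := Set.singleton_subset_iff.mpr hx0
  -- x k ∈ F^[k] B
  have hmem : ∀ k, x k ∈ F^[k] B := by
    intro k
    induction k with
    | zero => simp [hB]
    | succ k ih =>
      rw [Function.iterate_succ_apply', hF]
      exact Set.mem_iUnion.mpr ⟨σ (k+1), ⟨x k, ih, (hx k).symm⟩⟩
  -- compactness of iterates
  have hFc : ∀ S : Set X, IsCompact S → IsCompact (F S) := by
    intro S hS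
    rw [hF]
    exact isCompact_iUnion fun i => hS.image (hf i)
  have hitc : ∀ k, IsCompact (F^[k] B) := by
    intro k
    induction k with
    | zero => simpa using hBc
    | succ k ih => rw [Function.iterate_succ_apply']; exact hFc _ ih
  -- nonemptiness of iterates
  have hitne : ∀ k, (F^[k] B).Nonempty := fun k => ⟨x k, hmem k⟩
  -- Hausdorff edist finite
  have hedist : ∀ k, EMetric.hausdorffEdist (F^[k] B) A ≠ ⊤ := fun k =>
    hausdorffEdist_ne_top_of_nonempty_of_bounded (hitne k) hA
      (hitc k).isBounded hAc.isBounded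
  have htend := hattr B hBne hBc hBU
  have hev : ∀ᶠ k in atTop, hausdorffDist (F^[k] B) A < ε := by
    have := htend (Iio_mem_nhds hε)
    simpa using this
  rcases (eventually_atTop).1 hev with ⟨K, hK⟩
  refine ⟨K, fun k hk => ?_⟩
  have h1 : infDist (x k) A ≤ hausdorffDist (F^[k] B) A :=
    infDist_le_hausdorffDist_of_mem (hmem k) (hedist k)
  exact (mem_thickening_iff_infDist_lt hA).mpr (lt_of_le_of_lt h1 (hK k hk))
end

section
/- Let X be a proper complete metric space, let f_1, ..., f_N : X → X be continuous maps with Hutchinson operator F, let A be a nonempty compact set with F(A) = A, and let U be an open set with A ⊆ U such that F^k(B) → A in the Hausdorff metric for every nonempty compact B ⊆ U. Fix p ∈ (0, 1/N] and x_0 ∈ U. Let (Ω, 𝔉, P) be a probability space and let σ_1, σ_2, ... : Ω → {1,...,N} be random variables such that for every k ≥ 1 and every n ∈ {1,...,N}, the conditional probability that σ_k = n given σ_1, ..., σ_{k-1} is at least p; that is, for every event E measurable with respect to σ_1,...,σ_{k-1}, P({σ_k = n} ∩ E) ≥ p · P(E). Define the random orbit x_k(ω) = f_{σ_k(ω)}(x_{k-1}(ω))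 for k ≥ 1. Then, with probability one, for every ε > 0 there is an integer K such that for all L ≥ K the Hausdorff distance between A and the tail set {x_k : k ≥ L} is less than ε; that is, almost surely the tail sets {x_k}_{k≥K} converge to A in the Hausdorff distance as K → ∞. -/
/-!
Since `F^[k] {x₀} → A`, after a deterministic time every orbit lies in a compact neighbourhood
`D ⊆ U` of `A`. Fix `a ∈ A` and `ε > 0`. Applying the attractor property to `{z}` shows that every
`z ∈ D` is sent into `ball a ε` by some finite word of the IFS, and by compactness of `D` these
words can be taken of length at most `M`. Each word of length `≤ M` is followed with conditional
probability at least `p ^ M`, so from any time on the orbit enters `ball a ε` within `M` steps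
with conditional probability at least `p ^ M`; a conditional Borel–Cantelli argument turns this
into infinitely many visits, almost surely. Doing this for a countable dense set of centres and
radii shows that almost surely every point of `A` is a cluster point of the orbit, and together
with the approach to `A` this is the Hausdorff convergence of the tails.
-/

open Metric Filter MeasureTheory Set
open scoped Topology ENNReal

section Words

variable {ι X : Type*}

def hutchinson (f : ι → X → X) (S : Set X) : Set X := ⋃ i, f i '' S

/-- The letters of `w` are applied from left to right: `applyWord f [i, j] = f j ∘ f i`. -/
def applyWord (f : ι → X → X) (w : List ι) (z : X) : X := w.foldl (fun y i => f i y) z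

@[simp]
theorem applyWord_nil (f : ι → X → X) (z : X) : applyWord f [] z = z := rfl

@[simp]
theorem applyWord_cons (f : ι → X → X) (i : ι) (w : List ι) (z : X) :
    applyWord f (i :: w) z = applyWord f w (f i z) := rfl

theorem continuous_applyWord [TopologicalSpace X] {f : ι → X → X} (hf : ∀ i, Continuous (f i))
    (w : List ι) : Continuous (applyWord f w) := by
  induction w with
  | nil => exact continuous_id
  | cons i w ih => exact ih.comp (hf i)

theorem measurable_applyWord [MeasurableSpace X] {f : ι → X → X} (hf : ∀ i, Measurable (f i))
    (w : List ι) : Measurable (applyWord f w) := by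
  induction w with
  | nil => exact measurable_id
  | cons i w ih => exact ih.comp (hf i)

theorem hutchinson_iterate_nonempty [Nonempty ι] (f : ι → X → X) {B : Set X} (hB : B.Nonempty)
    (k : ℕ) : ((hutchinson f)^[k] B).Nonempty := by
  induction k with
  | zero => exact hB
  | succ k ih =>
    rw [Function.iterate_succ_apply']
    exact (ih.image _).mono (subset_iUnion (fun i => f i '' _) (Classical.arbitrary ι))

theorem isCompact_hutchinson_iterate [TopologicalSpace X] [Finite ι] {f : ι → X → X}
    (hf : ∀ i, Continuous (f i)) {B : Set X} (hB : IsCompact B) (k : ℕ) :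
    IsCompact ((hutchinson f)^[k] B) := by
  induction k with
  | zero => exact hB
  | succ k ih =>
    rw [Function.iterate_succ_apply']
    exact isCompact_iUnion fun i => ih.image (hf i)

theorem exists_applyWord_eq_of_mem_hutchinson_iterate {f : ι → X → X} {k : ℕ} {B : Set X} {y : X}
    (hy : y ∈ (hutchinson f)^[k] B) : ∃ w, ∃ b ∈ B, applyWord f w b = y := by
  induction k generalizing B with
  | zero => exact ⟨[], y, hy, rfl⟩
  | succ k ih =>
    obtain ⟨w, b, hb, rfl⟩ := ih hy
    obtain ⟨i, b₀, hb₀, rfl⟩ : ∃ i, ∃ b₀ ∈ B, f i b₀ = b := by simpa [hutchinson] using hb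
    exact ⟨i :: w, b₀, hb₀, rfl⟩

variable {f : ι → X → X} {s : ℕ → ι} {y : ℕ → X}

theorem orbit_mem_hutchinson_iterate (hy : ∀ k, y (k + 1) = f (s k) (y k)) (k : ℕ) :
    y k ∈ (hutchinson f)^[k] {y 0} := by
  induction k with
  | zero => exact rfl
  | succ k ih =>
    rw [Function.iterate_succ_apply', hy]
    exact mem_iUnion.2 ⟨s k, mem_image_of_mem _ ih⟩

theorem orbit_add_length (hy : ∀ k, y (k + 1) = f (s k) (y k)) {t : ℕ} {w : List ι}
    (hw : (List.range' t w.length).map s = w) : y (t + w.length) = applyWord f w (y t) := by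
  induction w generalizing t with
  | nil => rfl
  | cons i w ih =>
    simp only [List.length_cons, List.range'_succ, List.map_cons, List.cons.injEq] at hw
    rw [List.length_cons, ← Nat.add_assoc, Nat.add_right_comm, ih hw.2, hy, hw.1, applyWord_cons]

end Words

section Attractor

variable {ι X : Type*} [MetricSpace X] [Nonempty ι] [Finite ι] {f : ι → X → X} {A B : Set X}

theorem hausdorffEDist_hutchinson_iterate_ne_top (hf : ∀ i, Continuous (f i)) (hA : A.Nonempty)
    (hAb : Bornology.IsBounded A) (hB : B.Nonempty) (hBc : IsCompact B) (k : ℕ) :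
    hausdorffEDist ((hutchinson f)^[k] B) A ≠ ⊤ :=
  hausdorffEDist_ne_top_of_nonempty_of_bounded (hutchinson_iterate_nonempty f hB k) hA
    (isCompact_hutchinson_iterate hf hBc k).isBounded hAb

theorem eventually_forall_infDist_lt (hf : ∀ i, Continuous (f i)) (hA : A.Nonempty)
    (hAb : Bornology.IsBounded A) (hB : B.Nonempty) (hBc : IsCompact B)
    (hlim : Tendsto (fun k => hausdorffDist ((hutchinson f)^[k] B) A) atTop (𝓝 0))
    {δ : ℝ} (hδ : 0 < δ) : ∀ᶠ k in atTop, ∀ y ∈ (hutchinson f)^[k] B, infDist y A < δ :=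
  (hlim.eventually (gt_mem_nhds hδ)).mono fun k hk _ hy =>
    (infDist_le_hausdorffDist_of_mem hy
      (hausdorffEDist_hutchinson_iterate_ne_top hf hA hAb hB hBc k)).trans_lt hk

theorem exists_applyWord_mem_ball (hf : ∀ i, Continuous (f i)) (hA : A.Nonempty)
    (hAb : Bornology.IsBounded A) {z : X}
    (hlim : Tendsto (fun k => hausdorffDist ((hutchinson f)^[k] {z}) A) atTop (𝓝 0))
    {a : X} (ha : a ∈ A) {ε : ℝ} (hε : 0 < ε) : ∃ w, applyWord f w z ∈ ball a ε := by
  obtain ⟨k, hk⟩ := (hlim.eventually (gt_mem_nhds hε)).exists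
  obtain ⟨y, hy, hya⟩ := exists_dist_lt_of_hausdorffDist_lt' ha hk
    (hausdorffEDist_hutchinson_iterate_ne_top hf hA hAb (singleton_nonempty z)
      isCompact_singleton k)
  obtain ⟨w, _, rfl, rfl⟩ := exists_applyWord_eq_of_mem_hutchinson_iterate hy
  exact ⟨w, hya⟩

end Attractor

theorem IsCompact.exists_length_le_applyWord_mem {ι X : Type*} [TopologicalSpace X]
    {f : ι → X → X} (hf : ∀ i, Continuous (f i)) {D V : Set X} (hD : IsCompact D)
    (hV : IsOpen V) (h : ∀ z ∈ D, ∃ w, applyWord f w z ∈ V) :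
    ∃ M, ∀ z ∈ D, ∃ w : List ι, w.length ≤ M ∧ applyWord f w z ∈ V := by
  obtain ⟨M, hM⟩ := hD.elim_directed_cover (fun M : ℕ => ⋃ (w : List ι) (_ : w.length ≤ M),
      applyWord f w ⁻¹' V)
    (fun M => isOpen_biUnion fun w _ => hV.preimage (continuous_applyWord hf w))
    (fun z hz => by
      obtain ⟨w, hw⟩ := h z hz
      exact mem_iUnion.2 ⟨w.length, mem_iUnion₂.2 ⟨w, le_rfl, hw⟩⟩)
    (Monotone.directed_le fun M M' hMM' => biUnion_mono (fun w hw => le_trans hw hMM')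
      fun _ _ => subset_rfl)
  exact ⟨M, fun z hz => by simpa using hM hz⟩

section ConditionalLowerBound

variable {Ω : Type*} [m0 : MeasurableSpace Ω] {P : Measure Ω}

theorem measure_sdiff_le_one_sub_mul [IsFiniteMeasure P] {E S : Set Ω} {q : ℝ≥0∞}
    (hS : MeasurableSet S) (h : q * P E ≤ P (S ∩ E)) : P (E \ S) ≤ (1 - q) * P E := by
  have hsplit : P (E \ S) = P E - P (E ∩ S) :=
    ENNReal.eq_sub_of_add_eq (measure_ne_top P _)
      ((add_comm _ _).trans (measure_inter_add_sdiff E hS))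
  calc P (E \ S) = P E - P (E ∩ S) := hsplit
    _ ≤ P E - q * P E := by rw [inter_comm]; gcongr
    _ = (1 - q) * P E := by rw [ENNReal.sub_mul fun _ _ => measure_ne_top P E, one_mul]

/-- A form of Lévy's conditional Borel–Cantelli lemma. -/
theorem ae_frequently_mem_of_mul_le_measure_inter [IsFiniteMeasure P] {ℱ : ℕ → MeasurableSpace Ω}
    (hℱ : Monotone ℱ) (hℱle : ∀ n, ℱ n ≤ m0) {S : ℕ → Set Ω}
    (hS : ∀ n, MeasurableSet[ℱ (n + 1)] (S n)) {q : ℝ≥0∞} (hq0 : q ≠ 0)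
    (h : ∀ n E, MeasurableSet[ℱ n] E → q * P E ≤ P (S n ∩ E)) :
    ∀ᵐ ω ∂P, ∃ᶠ n in atTop, ω ∈ S n := by
  have hblock : ∀ n J, MeasurableSet[ℱ (n + J)] (⋂ j < J, (S (n + j))ᶜ) ∧
      P (⋂ j < J, (S (n + j))ᶜ) ≤ (1 - q) ^ J * P univ := by
    intro n J
    induction J with
    | zero => simp
    | succ J ih =>
      rw [biInter_lt_succ, ← sdiff_eq]
      refine ⟨(hℱ (by omega) _ ih.1).diff (hℱ (by omega) _ (hS (n + J))), ?_⟩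
      calc P ((⋂ j < J, (S (n + j))ᶜ) \ S (n + J))
          ≤ (1 - q) * P (⋂ j < J, (S (n + j))ᶜ) :=
            measure_sdiff_le_one_sub_mul (hℱle _ _ (hS (n + J))) (h _ _ ih.1)
        _ ≤ (1 - q) * ((1 - q) ^ J * P univ) := by gcongr; exact ih.2
        _ = (1 - q) ^ (J + 1) * P univ := by ring
  have hnull : ∀ n, P (⋂ j ≥ n, (S j)ᶜ) = 0 := by
    intro n
    have hlim : Tendsto (fun J => (1 - q) ^ J * P univ) atTop (𝓝 0) := by
      simpa using ENNReal.Tendsto.mul_const (ENNReal.tendsto_pow_atTop_nhds_zero_of_lt_one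
        (ENNReal.sub_lt_self ENNReal.one_ne_top one_ne_zero hq0)) (.inr (measure_ne_top P univ))
    refine nonpos_iff_eq_zero.1
      (ge_of_tendsto' hlim fun J => (measure_mono ?_).trans (hblock n J).2)
    exact subset_iInter₂ fun j _ => iInter₂_subset (n + j) (by omega)
  rw [ae_iff]
  refine measure_mono_null (fun ω hω => ?_) (measure_iUnion_null hnull)
  simpa [Filter.not_frequently, eventually_atTop] using hω

theorem mul_le_measure_inter_of_subset_biUnion {m : MeasurableSpace Ω} (hm : m ≤ m0)
    {S : Set Ω} {q : ℝ≥0∞} {κ : Type*} (s : Finset κ) {C : κ → Set Ω}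
    (hC : ∀ i ∈ s, MeasurableSet[m] (C i))
    (h : ∀ i ∈ s, ∀ E, MeasurableSet[m] E → E ⊆ C i → q * P E ≤ P (S ∩ E))
    {E : Set Ω} (hE : MeasurableSet[m] E) (hEC : E ⊆ ⋃ i ∈ s, C i) : q * P E ≤ P (S ∩ E) := by
  classical
  induction s using Finset.induction_on generalizing E with
  | empty => simp [subset_empty_iff.1 (by simpa using hEC)]
  | insert i s _ ih =>
    simp only [Finset.mem_insert, forall_eq_or_imp] at hC h
    have hCi : MeasurableSet[m0] (C i) := hm _ hC.1
    calc q * P E = q * P (E ∩ C i) + q * P (E \ C i) := by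
          rw [← mul_add, measure_inter_add_sdiff (μ := P) E hCi]
      _ ≤ P (S ∩ (E ∩ C i)) + P (S ∩ (E \ C i)) := by
          gcongr
          · exact h.1 _ (hE.inter hC.1) inter_subset_right
          · refine ih hC.2 h.2 (hE.diff hC.1) fun ω hω => ?_
            simpa [hω.2] using hEC hω.1
      _ = P (S ∩ E) := by
          rw [← inter_assoc, ← inter_sdiff_assoc, measure_inter_add_sdiff (μ := P) _ hCi]

end ConditionalLowerBound

section RandomOrbit

variable {ι X Ω : Type*}

abbrev pastSigma (σ : ℕ → Ω → ι) (t : ℕ) : MeasurableSpace Ω :=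
  ⨆ j : Fin t, MeasurableSpace.comap (σ j) ⊤

def wordEvent (σ : ℕ → Ω → ι) (t : ℕ) (w : List ι) : Set Ω :=
  {ω | (List.range' t w.length).map (σ · ω) = w}

theorem wordEvent_cons (σ : ℕ → Ω → ι) (t : ℕ) (i : ι) (w : List ι) :
    wordEvent σ t (i :: w) = {ω | σ t ω = i} ∩ wordEvent σ (t + 1) w := by
  ext ω
  simp [wordEvent, List.range'_succ]

theorem pastSigma_mono (σ : ℕ → Ω → ι) : Monotone (pastSigma σ) := fun _ _ hst =>
  iSup_le fun j => le_iSup_of_le (Fin.castLE hst j) le_rfl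

theorem comap_le_pastSigma_succ (σ : ℕ → Ω → ι) (t : ℕ) :
    MeasurableSpace.comap (σ t) ⊤ ≤ pastSigma σ (t + 1) :=
  le_iSup (fun j : Fin (t + 1) => MeasurableSpace.comap (σ j) ⊤) (Fin.last t)

theorem measurableSet_pastSigma_succ (σ : ℕ → Ω → ι) (t : ℕ) (i : ι) :
    MeasurableSet[pastSigma σ (t + 1)] {ω | σ t ω = i} :=
  comap_le_pastSigma_succ σ t _ ⟨{i}, trivial, rfl⟩

variable {σ : ℕ → Ω → ι}

theorem measurable_orbit_pastSigma [MeasurableSpace X] [Countable ι] {f : ι → X → X}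
    (hf : ∀ i, Measurable (f i)) {x : ℕ → Ω → X} {x₀ : X} (hx0 : ∀ ω, x 0 ω = x₀)
    (hxk : ∀ k ω, x (k + 1) ω = f (σ k ω) (x k ω)) (t : ℕ) :
    Measurable[pastSigma σ t] (x t) := by
  induction t with
  | zero => simp [funext hx0]
  | succ t ih =>
    let _ : MeasurableSpace ι := ⊤
    have hσt : Measurable[pastSigma σ (t + 1)] (σ t) :=
      measurable_iff_comap_le.2 (comap_le_pastSigma_succ σ t)
    have hf₂ : Measurable fun p : X × ι => f p.2 p.1 :=
      measurable_from_prod_countable_left fun i => hf i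
    have hx : x (t + 1) = (fun p : X × ι => f p.2 p.1) ∘ fun ω => (x t ω, σ t ω) := funext (hxk t)
    rw [hx]
    exact hf₂.comp ((ih.mono (pastSigma_mono σ t.le_succ) le_rfl).prodMk hσt)

variable [m0 : MeasurableSpace Ω]

theorem pastSigma_le [MeasurableSpace ι] [DiscreteMeasurableSpace ι]
    (hσ : ∀ k, Measurable (σ k)) (t : ℕ) : pastSigma σ t ≤ m0 :=
  iSup_le fun j => by
    rintro _ ⟨s, -, rfl⟩
    exact hσ j .of_discrete

variable {P : Measure Ω} {q : ℝ≥0∞}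

theorem pow_length_mul_le_measure_wordEvent_inter
    (hcond : ∀ k i E, MeasurableSet[pastSigma σ k] E → q * P E ≤ P ({ω | σ k ω = i} ∩ E))
    (w : List ι) {t : ℕ} {E : Set Ω} (hE : MeasurableSet[pastSigma σ t] E) :
    q ^ w.length * P E ≤ P (wordEvent σ t w ∩ E) := by
  induction w generalizing t E with
  | nil => simp [wordEvent]
  | cons i w ih =>
    have hE' : MeasurableSet[pastSigma σ (t + 1)] ({ω | σ t ω = i} ∩ E) :=
      (measurableSet_pastSigma_succ σ t i).inter (pastSigma_mono σ t.le_succ _ hE)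
    calc q ^ (i :: w).length * P E = q ^ w.length * (q * P E) := by
          rw [List.length_cons, pow_succ, mul_assoc]
      _ ≤ q ^ w.length * P ({ω | σ t ω = i} ∩ E) := by gcongr; exact hcond t i E hE
      _ ≤ P (wordEvent σ (t + 1) w ∩ ({ω | σ t ω = i} ∩ E)) := ih hE'
      _ = P (wordEvent σ t (i :: w) ∩ E) := by rw [wordEvent_cons, inter_left_comm, inter_assoc]

variable [MeasurableSpace ι] [DiscreteMeasurableSpace ι] [Finite ι] [MeasurableSpace X]
  {f : ι → X → X} {x : ℕ → Ω → X} {x₀ : X} {D V : Set X} {M : ℕ}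

theorem pow_mul_le_measure_visit_inter (hσ : ∀ k, Measurable (σ k)) (hf : ∀ i, Measurable (f i))
    (hx0 : ∀ ω, x 0 ω = x₀) (hxk : ∀ k ω, x (k + 1) ω = f (σ k ω) (x k ω))
    (hcond : ∀ k i E, MeasurableSet[pastSigma σ k] E → q * P E ≤ P ({ω | σ k ω = i} ∩ E))
    (hq : q ≤ 1) (hV : MeasurableSet V)
    (hM : ∀ z ∈ D, ∃ w : List ι, w.length ≤ M ∧ applyWord f w z ∈ V)
    {t : ℕ} (hxD : ∀ ω, x t ω ∈ D) {E : Set Ω} (hE : MeasurableSet[pastSigma σ t] E) :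
    q ^ M * P E ≤ P ({ω | ∃ j ≤ M, x (t + j) ω ∈ V} ∩ E) := by
  refine mul_le_measure_inter_of_subset_biUnion (pastSigma_le hσ t)
    (List.finite_length_le ι M).toFinset (C := fun w => {ω | applyWord f w (x t ω) ∈ V})
    (fun w _ => (measurable_applyWord hf w).comp
      (measurable_orbit_pastSigma hf hx0 hxk t) hV) (fun w hw E' hE' hE'C => ?_) hE
    (fun ω _ => by simpa using hM (x t ω) (hxD ω))
  rw [Set.Finite.mem_toFinset, mem_ofPred_eq] at hw
  calc q ^ M * P E' ≤ q ^ w.length * P E' := mul_le_mul_left (pow_le_pow_right_of_le_one' hq hw) _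
    _ ≤ P (wordEvent σ t w ∩ E') := pow_length_mul_le_measure_wordEvent_inter hcond w hE'
    _ ≤ P ({ω | ∃ j ≤ M, x (t + j) ω ∈ V} ∩ E') := by
        refine measure_mono fun ω hω => ⟨⟨w.length, hw, ?_⟩, hω.2⟩
        have hfollow : x (t + w.length) ω = applyWord f w (x t ω) :=
          orbit_add_length (y := (x · ω)) (s := (σ · ω)) (hxk · ω) hω.1
        exact hfollow ▸ hE'C hω.2

theorem ae_frequently_orbit_mem [IsFiniteMeasure P] (hσ : ∀ k, Measurable (σ k))
    (hf : ∀ i, Measurable (f i)) (hx0 : ∀ ω, x 0 ω = x₀)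
    (hxk : ∀ k ω, x (k + 1) ω = f (σ k ω) (x k ω))
    (hcond : ∀ k i E, MeasurableSet[pastSigma σ k] E → q * P E ≤ P ({ω | σ k ω = i} ∩ E))
    (hq0 : q ≠ 0) (hq : q ≤ 1) (hV : MeasurableSet V)
    (hM : ∀ z ∈ D, ∃ w : List ι, w.length ≤ M ∧ applyWord f w z ∈ V)
    {T : ℕ} (hxD : ∀ k ≥ T, ∀ ω, x k ω ∈ D) : ∀ᵐ ω ∂P, ∃ᶠ k in atTop, x k ω ∈ V := by
  -- sample the past at times `τ n`, spaced so that the `n`-th window `[τ n, τ n + M]` is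
  -- observed by time `τ (n + 1)`
  set τ : ℕ → ℕ := fun n => T + n * (M + 1) with hτ
  have hτ_mono : Monotone τ := fun m n hmn => by simp only [hτ]; gcongr
  have hwindow : ∀ n, MeasurableSet[pastSigma σ (τ (n + 1))] {ω | ∃ j ≤ M, x (τ n + j) ω ∈ V} := by
    intro n
    have hunion : {ω | ∃ j ≤ M, x (τ n + j) ω ∈ V} = ⋃ j ∈ Iic M, x (τ n + j) ⁻¹' V := by
      ext; simp
    have hτ_succ : τ (n + 1) = τ n + (M + 1) := by simp only [hτ]; ring
    rw [hunion]
    refine .biUnion (to_countable _) fun j hj => ?_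
    exact (measurable_orbit_pastSigma hf hx0 hxk _).mono
      (pastSigma_mono σ (by rw [hτ_succ]; exact Nat.add_le_add_left (Nat.le_succ_of_le hj) _))
      le_rfl hV
  have hfreq := ae_frequently_mem_of_mul_le_measure_inter ((pastSigma_mono σ).comp hτ_mono)
    (fun n => pastSigma_le hσ (τ n)) hwindow (pow_ne_zero M hq0) fun n E hE =>
      pow_mul_le_measure_visit_inter hσ hf hx0 hxk hcond hq hV hM
        (hxD _ (Nat.le_add_right _ _)) hE
  filter_upwards [hfreq] with ω hω
  refine frequently_atTop.2 fun L => ?_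
  obtain ⟨n, hLn, j, -, hj⟩ := hω.forall_exists_of_atTop L
  have hnτ : n ≤ τ n := Nat.le_add_left_of_le (Nat.le_mul_of_pos_right n M.succ_pos)
  exact ⟨τ n + j, by omega, hj⟩

end RandomOrbit

theorem exists_forall_hausdorffDist_image_Ici_lt {X : Type*} [PseudoMetricSpace X] {y : ℕ → X}
    {A : Set X} (hclust : ∀ a ∈ A, MapClusterPt a atTop y)
    (hnear : ∀ δ > 0, ∀ᶠ k in atTop, infDist (y k) A < δ) {ε : ℝ} (hε : 0 < ε) :
    ∃ K, ∀ L ≥ K, hausdorffDist A (y '' Ici L) < ε := by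
  obtain ⟨K, hK⟩ := (hnear (ε / 2) (half_pos hε)).exists_forall_of_atTop
  refine ⟨K, fun L hL => (hausdorffDist_le_of_infDist (half_pos hε).le ?_ ?_).trans_lt
    (half_lt_self hε)⟩
  · intro a ha
    obtain ⟨k, hLk, hk⟩ := (mapClusterPt_iff_frequently.1 (hclust a ha) _
      (ball_mem_nhds a (half_pos hε))).forall_exists_of_atTop L
    exact (infDist_le_dist_of_mem (mem_image_of_mem y hLk)).trans
      (dist_comm a (y k) ▸ (mem_ball.1 hk).le)
  · rintro _ ⟨k, hLk, rfl⟩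
    exact (hK k (hL.trans hLk)).le

theorem ae_forall_mapClusterPt {X Ω : Type*} [PseudoMetricSpace X] [MeasurableSpace Ω]
    {P : Measure Ω} {y : Ω → ℕ → X} {A : Set X} (hA : TopologicalSpace.IsSeparable A)
    (h : ∀ a ∈ A, ∀ ε > 0, ∀ᵐ ω ∂P, ∃ᶠ k in atTop, y ω k ∈ ball a ε) :
    ∀ᵐ ω ∂P, ∀ a ∈ A, MapClusterPt a atTop (y ω) := by
  obtain ⟨s, hsA, hs, hAs⟩ := hA.exists_countable_dense_subset
  have hae : ∀ᵐ ω ∂P, ∀ b ∈ s, ∀ n : ℕ, ∃ᶠ k in atTop, y ω k ∈ ball b (1 / (n + 1)) :=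
    (ae_ball_iff hs).2 fun b hb => ae_all_iff.2 fun n => h b (hsA hb) _ Nat.one_div_pos_of_nat
  filter_upwards [hae] with ω hω
  have hsclust : s ⊆ {a | MapClusterPt a atTop (y ω)} := fun b hb =>
    nhds_basis_ball_inv_nat_succ.mapClusterPt_iff_frequently.2 fun n _ => hω b hb n
  exact hAs.trans (closure_minimal hsclust isClosed_setOfPred_clusterPt)

theorem chaos_game_general {X : Type*} [MetricSpace X] [ProperSpace X]
    {N : ℕ} (f : Fin N → X → X) (hf : ∀ i, Continuous (f i))
    (F : Set X → Set X) (hF : ∀ S : Set X, F S = ⋃ i, f i '' S)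
    (A : Set X) (hA : A.Nonempty) (hAc : IsCompact A)
    (U : Set X) (hU : IsOpen U) (hAU : A ⊆ U)
    (hattr : ∀ B : Set X, B.Nonempty → IsCompact B → B ⊆ U →
      Tendsto (fun k => hausdorffDist (F^[k] B) A) atTop (𝓝 0))
    (p : ℝ) (hp : 0 < p)
    (x₀ : X) (hx₀ : x₀ ∈ U)
    {Ω : Type*} [MeasurableSpace Ω] (P : Measure Ω) [IsProbabilityMeasure P]
    (σ : ℕ → Ω → Fin N) (hσ : ∀ k, Measurable (σ k))
    (hcond : ∀ (k : ℕ) (n : Fin N) (E : Set Ω),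
      MeasurableSet[⨆ j : Fin k, MeasurableSpace.comap (σ (j : ℕ)) ⊤] E →
      ENNReal.ofReal p * P E ≤ P ({ω | σ k ω = n} ∩ E))
    (x : ℕ → Ω → X) (hx0 : ∀ ω, x 0 ω = x₀)
    (hxk : ∀ (k : ℕ) (ω : Ω), x (k + 1) ω = f (σ k ω) (x k ω)) :
    ∀ᵐ ω ∂P, ∀ ε > (0 : ℝ), ∃ K : ℕ, ∀ L ≥ K,
      hausdorffDist A ((fun k => x k ω) '' Set.Ici L) < ε := by
  obtain rfl : F = hutchinson f := funext hF
  let _ : MeasurableSpace X := borel X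
  have _ : BorelSpace X := ⟨rfl⟩
  obtain ⟨ω₀⟩ := nonempty_of_isProbabilityMeasure P
  have _ : Nonempty (Fin N) := ⟨σ 0 ω₀⟩
  have hp1 : ENNReal.ofReal p ≤ 1 := by
    simpa using (hcond 0 (σ 0 ω₀) univ MeasurableSet.univ).trans prob_le_one
  have hnear : ∀ δ > 0, ∀ᶠ k in atTop, ∀ ω, infDist (x k ω) A < δ := fun δ hδ =>
    (eventually_forall_infDist_lt hf hA hAc.isBounded (singleton_nonempty x₀) isCompact_singleton
      (hattr _ (singleton_nonempty x₀) isCompact_singleton (singleton_subset_iff.2 hx₀)) hδ).mono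
      fun k hk ω => hk _ (hx0 ω ▸ orbit_mem_hutchinson_iterate (y := (x · ω)) (hxk · ω) k)
  obtain ⟨δ, hδ, hδU⟩ := hAc.exists_cthickening_subset_open hU hAU
  obtain ⟨T, hT⟩ := (hnear δ hδ).exists_forall_of_atTop
  have hxD : ∀ k ≥ T, ∀ ω, x k ω ∈ cthickening δ A := fun k hk ω =>
    thickening_subset_cthickening δ A ((mem_thickening_iff_infDist_lt hA).2 (hT k hk ω))
  have hvisit : ∀ a ∈ A, ∀ ε > 0, ∀ᵐ ω ∂P, ∃ᶠ k in atTop, x k ω ∈ ball a ε := by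
    intro a ha ε hε
    obtain ⟨M, hM⟩ := hAc.cthickening.exists_length_le_applyWord_mem hf isOpen_ball
      fun z hz => exists_applyWord_mem_ball hf hA hAc.isBounded (hattr _ (singleton_nonempty z)
        isCompact_singleton (singleton_subset_iff.2 (hδU hz))) ha hε
    exact ae_frequently_orbit_mem hσ (fun i => (hf i).measurable) hx0 hxk hcond
      (by simpa using hp) hp1 measurableSet_ball hM hxD
  filter_upwards [ae_forall_mapClusterPt hAc.isSeparable hvisit] with ω hω ε hε
  exact exists_forall_hausdorffDist_image_Ici_lt hω
    (fun δ hδ => (hnear δ hδ).mono fun k hk => hk ω) hε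

/-- The chaos game theorem. Let `X` be a proper complete metric space, `F` the Hutchinson
operator of an IFS of continuous maps `f 1, …, f N`, and `A` an attractor (`F A = A`) whose
basin contains the open set `U`. Fix `p ∈ (0, 1/N]` and `x₀ ∈ U`, and let `σ 0, σ 1, …` be
random selections such that, conditionally on the past (any event measurable with respect
to the earlier selections), each index is chosen with probability at least `p`. If
`x (k+1) = f (σ k) (x k)` is the associated random orbit started at `x₀`, then almost
surely the tail sets `{x k : k ≥ L}` converge to `A` in the Hausdorff distance. -/
theorem chaos_game {X : Type*} [MetricSpace X] [ProperSpace X] [CompleteSpace X]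
    {N : ℕ} (f : Fin N → X → X) (hf : ∀ i, Continuous (f i))
    (F : Set X → Set X) (hF : ∀ S : Set X, F S = ⋃ i, f i '' S)
    (A : Set X) (hA : A.Nonempty) (hAc : IsCompact A) (hfix : F A = A)
    (U : Set X) (hU : IsOpen U) (hAU : A ⊆ U)
    (hattr : ∀ B : Set X, B.Nonempty → IsCompact B → B ⊆ U →
      Tendsto (fun k => hausdorffDist (F^[k] B) A) atTop (𝓝 0))
    (p : ℝ) (hp : 0 < p) (hpN : p ≤ 1 / N)
    (x₀ : X) (hx₀ : x₀ ∈ U)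
    {Ω : Type*} [MeasurableSpace Ω] (P : Measure Ω) [IsProbabilityMeasure P]
    (σ : ℕ → Ω → Fin N) (hσ : ∀ k, Measurable (σ k))
    (hcond : ∀ (k : ℕ) (n : Fin N) (E : Set Ω),
      MeasurableSet[⨆ j : Fin k, MeasurableSpace.comap (σ (j : ℕ)) ⊤] E →
      ENNReal.ofReal p * P E ≤ P ({ω | σ k ω = n} ∩ E))
    (x : ℕ → Ω → X) (hx0 : ∀ ω, x 0 ω = x₀)
    (hxk : ∀ (k : ℕ) (ω : Ω), x (k + 1) ω = f (σ k ω) (x k ω)) :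
    ∀ᵐ ω ∂P, ∀ ε > (0 : ℝ), ∃ K : ℕ, ∀ L ≥ K,
      hausdorffDist A ((fun k => x k ω) '' Set.Ici L) < ε :=
  chaos_game_general f hf F hF A hA hAc U hU hAU hattr p hp x₀ hx₀ P σ hσ hcond x hx0 hxk
end

section
/- Let X = {z ∈ ℂ : |z| = 1} be the unit circle with the metric induced from ℂ, let α be a real number such that α/π is irrational, let f_1 : X → X be the identity map and f_2 : X → X the rotation f_2(z) = e^{iα} z, and let F be the Hutchinson operator of the IFS (X; f_1, f_2). Then X is the unique attractor of this IFS: F(X) = X, and for every nonempty compact set B ⊆ X, the iterates F^k(B) converge to X in the Hausdorff metric as k → ∞. -/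
/-!
Because the identity is one of the maps, the iterates `F^[k] B` increase with `k`, and the
rotation puts `e^{ikα} b` into `F^[k] B` for every `b ∈ B`. Irrationality of `α / 2π` makes
this orbit dense, so by compactness of the circle finitely many orbit points are already
`ε`-dense, and they all lie in `F^[k] B` once `k` is large.
-/

open Metric Filter Set Function
open scoped Topology

theorem Circle.denseRange_zpow_exp {α : ℝ} (hα : Irrational (α / Real.pi)) :
    DenseRange (Circle.exp α ^ · : ℤ → Circle) := by
  have h2π : Irrational (α / (2 * Real.pi)) := by
    rw [mul_comm, ← div_div]
    exact_mod_cast hα.div_natCast two_ne_zero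
  convert AddCircle.homeomorphCircle'.surjective.denseRange.comp
    (AddCircle.denseRange_zsmul_coe_iff.2 h2π) AddCircle.homeomorphCircle'.continuous using 1
  ext n : 1
  rw [comp_apply, ← AddCircle.coe_zsmul, AddCircle.homeomorphCircle'_apply_mk, Circle.exp_zsmul]

theorem DenseRange.pow_mul {G : Type*} [Group G] [TopologicalSpace G] [IsTopologicalGroup G]
    [CompactSpace G] {g : G} (hg : DenseRange (g ^ · : ℤ → G)) (b : G) :
    DenseRange (fun n : ℕ => g ^ n * b) :=
  (mul_right_surjective b).denseRange.comp (denseRange_zpow_iff_pow.1 hg) (continuous_mul_const b)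

theorem iterate_mem_iterate_of_image_subset {X : Type*} {F : Set X → Set X} {f : X → X}
    (hF : ∀ S, f '' S ⊆ F S) {B : Set X} {b : X} (hb : b ∈ B) (k : ℕ) :
    f^[k] b ∈ F^[k] B := by
  induction k with
  | zero => exact hb
  | succ k ih =>
    rw [iterate_succ_apply', iterate_succ_apply']
    exact hF _ (mem_image_of_mem f ih)

theorem tendsto_hausdorffDist_univ_of_monotone {X : Type*} [PseudoMetricSpace X] [CompactSpace X]
    {A : ℕ → Set X} (hA : Monotone A) (hd : Dense (⋃ k, A k)) :
    Tendsto (fun k => hausdorffDist (A k) univ) atTop (𝓝 0) := by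
  refine tendsto_order.2 ⟨fun a ha => Eventually.of_forall fun k => ha.trans_le
    hausdorffDist_nonneg, fun ε hε => ?_⟩
  have hcover : univ ⊆ ⋃ k, thickening (ε / 2) (A k) := by
    rw [← thickening_iUnion, ← hd.closure_eq]
    exact closure_subset_thickening (half_pos hε) _
  obtain ⟨K, hK⟩ := isCompact_univ.elim_directed_cover (fun k => thickening (ε / 2) (A k))
    (fun _ => isOpen_thickening) hcover
    (Monotone.directed_le fun _ _ hkl => thickening_subset_of_subset _ (hA hkl))
  refine eventually_atTop.2 ⟨K, fun k hk => ?_⟩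
  refine (hausdorffDist_le_of_mem_dist (half_pos hε).le
    (fun x _ => ⟨x, mem_univ x, (dist_self x).trans_le (half_pos hε).le⟩)
    (fun z _ => ?_)).trans_lt (half_lt_self hε)
  obtain ⟨y, hy, hzy⟩ := mem_thickening_iff.1 (hK (mem_univ z))
  exact ⟨y, hA hk hy, hzy.le⟩

/-- Let `X` be the unit circle in `ℂ`, `α` a real number with `α / π` irrational, and let
`F` be the Hutchinson operator of the IFS consisting of the identity map and the rotation
`z ↦ e^{iα} z`. Then `X` is the unique attractor of this IFS: `F X = X` and, for every
nonempty compact `B ⊆ X`, the iterates `F^[k] B` converge to `X` in the Hausdorff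
metric. -/
theorem circle_attractor_of_identity_and_irrational_rotation (α : ℝ)
    (hα : Irrational (α / Real.pi))
    (F : Set Circle → Set Circle)
    (hF : ∀ S : Set Circle, F S = (id '' S) ∪ ((fun z => Circle.exp α * z) '' S)) :
    F Set.univ = Set.univ ∧
      ∀ B : Set Circle, B.Nonempty → IsCompact B →
        Tendsto (fun k => hausdorffDist (F^[k] B) (Set.univ : Set Circle))
          atTop (𝓝 0) := by
  have hid : ∀ S, S ⊆ F S := fun S => by rw [hF, image_id]; exact subset_union_left
  have hrot : ∀ S, (Circle.exp α * ·) '' S ⊆ F S := fun S => by rw [hF]; exact subset_union_right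
  refine ⟨(subset_univ _).antisymm (hid univ), fun B ⟨b, hb⟩ _ => ?_⟩
  refine tendsto_hausdorffDist_univ_of_monotone
    (fun k l hkl => monotone_iterate_of_id_le hid hkl B) ?_
  refine ((Circle.denseRange_zpow_exp hα).pow_mul b).mono ?_
  rintro _ ⟨n, rfl⟩
  have horbit := iterate_mem_iterate_of_image_subset hrot hb n
  rw [mul_left_iterate_apply] at horbit
  exact mem_iUnion_of_mem n horbit
end
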